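/- arXiv:2003.11422 — 3 statements merged into one kernel-verified Lean document; each statement's English description precedes it below -/
import Mathlib

section
/- Let ρ, T, s, e_s : ℝ³ → ℝ be smooth functions with ρ(x) > 0 and T(x) > 0 for all x, let τ : ℝ³ → M₃(ℝ) be a smooth matrix field with τ(x) symmetric for every x, and let e_v : ℝ³ → ℝ³ be smooth and compactly supported. Then ∫_{ℝ³} e_v · [ (grad s)·(e_s/ρ) − (1/ρ) Div( (e_s/(ρT)) τ ) ] dx = ∫_{ℝ³} [ (grad s)·(e_v/ρ) + (1/(ρT)) τ : Grad(e_v/ρ) ] e_s dx; that is, with vanishing boundary conditions the operator J_τ* e_v = (grad s)·(e_v/ρ) + (τ/(ρT)) : Grad(e_v/ρ) is the formal adjoint of J_τ e_s = (grad s)(e_s/ρ) − (1/ρ) Div( (τ/(ρT)) e_s ). -/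
open MeasureTheory Matrix

noncomputable section

/-- Points of ℝ³. -/
abbrev R3 : Type := Fin 3 → ℝ

/-- Partial derivative `∂f/∂xᵢ` of a scalar field. -/
def pd (i : Fin 3) (f : R3 → ℝ) (x : R3) : ℝ := fderiv ℝ f x (Pi.single i 1)

/-- Gradient of a scalar field. -/
def grad (f : R3 → ℝ) (x : R3) : R3 := fun i => pd i f x

/-- Divergence of a vector field. -/
def vdiv (u : R3 → R3) (x : R3) : ℝ := ∑ i, pd i (fun y => u y i) x

/-- Jacobian matrix `(Grad u)ᵢⱼ = ∂uᵢ/∂xⱼ` of a vector field. -/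
def vGrad (u : R3 → R3) (x : R3) : Matrix (Fin 3) (Fin 3) ℝ :=
  Matrix.of fun i j => pd j (fun y => u y i) x

/-- Divergence `(Div A)ⱼ = ∑ᵢ ∂Aᵢⱼ/∂xᵢ` of a matrix field. -/
def mDiv (A : R3 → Matrix (Fin 3) (Fin 3) ℝ) (x : R3) : R3 :=
  fun j => ∑ i, pd i (fun y => A y i j) x

/-- Frobenius inner product `A : B = ∑ᵢⱼ Aᵢⱼ Bᵢⱼ`. -/
def frob (A B : Matrix (Fin 3) (Fin 3) ℝ) : ℝ := ∑ i, ∑ j, A i j * B i j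

/-- Curl of a vector field. -/
def curl (u : R3 → R3) (x : R3) : R3 :=
  ![pd 1 (fun y => u y 2) x - pd 2 (fun y => u y 1) x,
    pd 2 (fun y => u y 0) x - pd 0 (fun y => u y 2) x,
    pd 0 (fun y => u y 1) x - pd 1 (fun y => u y 0) x]

/-- Cross product on ℝ³. -/
def cross (u v : R3) : R3 :=
  ![u 1 * v 2 - u 2 * v 1, u 2 * v 0 - u 0 * v 2, u 0 * v 1 - u 1 * v 0]

open Set Function

lemma pd_continuous {f : R3 → ℝ} (hf : ContDiff ℝ (⊤ : ℕ∞) f) (i : Fin 3) :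
    Continuous (fun x => pd i f x) :=
  (hf.continuous_fderiv (by simp)).clm_apply continuous_const

lemma pd_mul {f g : R3 → ℝ} (hf : Differentiable ℝ f) (hg : Differentiable ℝ g)
    (i : Fin 3) (x : R3) :
    pd i (fun y => f y * g y) x = pd i f x * g x + f x * pd i g x := by
  unfold pd
  rw [fderiv_fun_mul (hf x) (hg x)]
  simp only [ContinuousLinearMap.add_apply, ContinuousLinearMap.smul_apply, smul_eq_mul]
  ring

lemma pd_eq_zero_of_nmem {f : R3 → ℝ} {x : R3} (hx : x ∉ tsupport f) (i : Fin 3) :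
    pd i f x = 0 := by
  have h : fderiv ℝ f x = 0 := by
    by_contra h
    exact hx (support_fderiv_subset ℝ (f := f) h)
  simp [pd, h]

lemma pd_integrable {g : R3 → ℝ} (hg : ContDiff ℝ (⊤ : ℕ∞) g) (hsupp : HasCompactSupport g)
    (i : Fin 3) : Integrable (fun x => pd i g x) volume :=
  (pd_continuous hg i).integrable_of_hasCompactSupport
    ((hsupp.fderiv (𝕜 := ℝ)).comp_left (g := fun L : R3 →L[ℝ] ℝ => L (Pi.single i 1)) (by simp))

lemma integral_pd_eq_zero {g : R3 → ℝ} (hg : ContDiff ℝ (⊤ : ℕ∞) g) (hsupp : HasCompactSupport g)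
    (i : Fin 3) : ∫ x, pd i g x = 0 := by
  have h := integral_mul_fderiv_eq_neg_fderiv_mul_of_integrable
    (μ := volume) (f := fun _ : R3 => (1:ℝ)) (g := g) (v := Pi.single i 1)
    (by simp [fderiv_fun_const]) (by simpa [pd] using pd_integrable hg hsupp i)
    ((hg.continuous.integrable_of_hasCompactSupport hsupp).congr
      (Filter.Eventually.of_forall fun x => by simp))
    (fun x _ => (differentiable_const (1:ℝ)) x) (fun x _ => (hg.differentiable (by simp)) x)
  simpa [pd, fderiv_fun_const] using h

/-- Lemma 1 of the paper (zero-boundary form): the operator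
`J_τ* e_v = (grad s)·(e_v/ρ) + (τ/(ρT)) : Grad(e_v/ρ)` is the formal adjoint of
`J_τ e_s = (grad s)(e_s/ρ) − (1/ρ) Div((τ/(ρT)) e_s)`. -/
theorem stmt0 (ρ T s e_s : R3 → ℝ) (e_v : R3 → R3)
    (τ : R3 → Matrix (Fin 3) (Fin 3) ℝ)
    (hρ : ContDiff ℝ (⊤ : ℕ∞) ρ) (hT : ContDiff ℝ (⊤ : ℕ∞) T) (hs : ContDiff ℝ (⊤ : ℕ∞) s)
    (hes : ContDiff ℝ (⊤ : ℕ∞) e_s)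
    (hρpos : ∀ x, 0 < ρ x) (hTpos : ∀ x, 0 < T x)
    (hτ : ∀ i j, ContDiff ℝ (⊤ : ℕ∞) fun x => τ x i j)
    (hτsym : ∀ x, (τ x).IsSymm)
    (hev : ContDiff ℝ (⊤ : ℕ∞) e_v) (hevsupp : HasCompactSupport e_v) :
    ∫ x, e_v x ⬝ᵥ (fun i => grad s x i * (e_s x / ρ x)
        - (1 / ρ x) * mDiv (fun y => (e_s y / (ρ y * T y)) • τ y) x i)
      = ∫ x, (grad s x ⬝ᵥ (fun i => e_v x i / ρ x)
        + (1 / (ρ x * T x)) * frob (τ x) (vGrad (fun y i => e_v y i / ρ y) x)) * e_s x := by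
  have hρne : ∀ x, ρ x ≠ 0 := fun x => (hρpos x).ne'
  have hρTne : ∀ x, ρ x * T x ≠ 0 := fun x => (mul_pos (hρpos x) (hTpos x)).ne'
  have hevi : ∀ i, ContDiff ℝ (⊤ : ℕ∞) (fun x => e_v x i) := fun i => by
    exact ((ContinuousLinearMap.proj (R := ℝ) (φ := fun _ : Fin 3 => ℝ) i).contDiff).comp hev
  have hw : ∀ i, ContDiff ℝ (⊤ : ℕ∞) (fun x => e_v x i / ρ x) := fun i => (hevi i).div hρ hρne
  have hA : ∀ i j, ContDiff ℝ (⊤ : ℕ∞) (fun x => e_s x / (ρ x * T x) * τ x i j) := fun i j =>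
    (hes.div (hρ.mul hT) hρTne).mul (hτ i j)
  have hGc : ∀ i j, ContDiff ℝ (⊤ : ℕ∞)
      (fun y => e_s y / (ρ y * T y) * τ y i j * (e_v y j / ρ y)) := fun i j =>
    (hA i j).mul (hw j)
  -- supports
  have hw_supp : ∀ i, support (fun x => e_v x i / ρ x) ⊆ support e_v := by
    intro i x hx
    simp only [mem_support] at hx ⊢
    intro h0
    apply hx
    rw [h0]
    simp
  have hw_ts : ∀ i, tsupport (fun x => e_v x i / ρ x) ⊆ tsupport e_v := fun i =>
    closure_mono (hw_supp i)
  have hGsupp : ∀ i j, HasCompactSupport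
      (fun y => e_s y / (ρ y * T y) * τ y i j * (e_v y j / ρ y)) := by
    intro i j
    apply hevsupp.mono'
    intro x hx
    apply subset_closure
    simp only [mem_support] at hx ⊢
    intro h0
    apply hx
    rw [h0]
    simp
  -- integrability of each pd term
  have hpdG : ∀ i j, Integrable
      (fun x => pd i (fun y => e_s y / (ρ y * T y) * τ y i j * (e_v y j / ρ y)) x) volume :=
    fun i j => pd_integrable (hGc i j) (hGsupp i j) i
  -- integrability of the RHS integrand
  have hRcont : Continuous (fun x => (grad s x ⬝ᵥ (fun i => e_v x i / ρ x)
      + (1 / (ρ x * T x)) * frob (τ x) (vGrad (fun y i => e_v y i / ρ y) x)) * e_s x) := by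
    simp only [dotProduct, grad, frob, vGrad, Matrix.of_apply]
    refine Continuous.mul (Continuous.add ?_ ?_) hes.continuous
    · exact continuous_finset_sum _ fun i _ =>
        (pd_continuous hs i).mul ((hevi i).continuous.div hρ.continuous hρne)
    · refine Continuous.mul
        (continuous_const.div (hρ.continuous.mul hT.continuous) hρTne) ?_
      exact continuous_finset_sum _ fun i _ => continuous_finset_sum _ fun j _ =>
        ((hτ i j).continuous.mul (pd_continuous (hw i) j))
  have hRsupp : HasCompactSupport (fun x => (grad s x ⬝ᵥ (fun i => e_v x i / ρ x)
      + (1 / (ρ x * T x)) * frob (τ x) (vGrad (fun y i => e_v y i / ρ y) x)) * e_s x) := by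
    apply hevsupp.mono'
    intro x hx
    by_contra hxt
    apply hx
    have hev0 : e_v x = 0 := image_eq_zero_of_notMem_tsupport hxt
    have hpd0 : ∀ i j, pd j (fun y => e_v y i / ρ y) x = 0 := fun i j =>
      pd_eq_zero_of_nmem (fun h => hxt (hw_ts i h)) j
    simp [dotProduct, grad, frob, vGrad, hev0, hpd0]
  have hR : Integrable (fun x => (grad s x ⬝ᵥ (fun i => e_v x i / ρ x)
      + (1 / (ρ x * T x)) * frob (τ x) (vGrad (fun y i => e_v y i / ρ y) x)) * e_s x) volume :=
    hRcont.integrable_of_hasCompactSupport hRsupp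
  -- the divergence term
  have hD : Integrable (fun x => ∑ i, ∑ j,
      pd i (fun y => e_s y / (ρ y * T y) * τ y i j * (e_v y j / ρ y)) x) volume :=
    integrable_finset_sum _ fun i _ => integrable_finset_sum _ fun j _ => hpdG i j
  have hD0 : ∫ x, (∑ i, ∑ j,
      pd i (fun y => e_s y / (ρ y * T y) * τ y i j * (e_v y j / ρ y)) x) = 0 := by
    rw [integral_finset_sum _ fun i _ => integrable_finset_sum _ fun j _ => hpdG i j]
    rw [Finset.sum_eq_zero]
    intro i _
    rw [integral_finset_sum _ fun j _ => hpdG i j]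
    exact Finset.sum_eq_zero fun j _ => integral_pd_eq_zero (hGc i j) (hGsupp i j) i
  -- pointwise identity
  have hpt : ∀ x, e_v x ⬝ᵥ (fun i => grad s x i * (e_s x / ρ x)
        - (1 / ρ x) * mDiv (fun y => (e_s y / (ρ y * T y)) • τ y) x i)
      = (grad s x ⬝ᵥ (fun i => e_v x i / ρ x)
        + (1 / (ρ x * T x)) * frob (τ x) (vGrad (fun y i => e_v y i / ρ y) x)) * e_s x
        - ∑ i, ∑ j, pd i (fun y => e_s y / (ρ y * T y) * τ y i j * (e_v y j / ρ y)) x := by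
    intro x
    have hprod : ∀ i j : Fin 3,
        pd i (fun y => e_s y / (ρ y * T y) * τ y i j * (e_v y j / ρ y)) x
        = pd i (fun y => e_s y / (ρ y * T y) * τ y i j) x * (e_v x j / ρ x)
          + (e_s x / (ρ x * T x) * τ x i j) * pd i (fun y => e_v y j / ρ y) x := fun i j =>
      pd_mul ((hA i j).differentiable (by simp)) ((hw j).differentiable (by simp)) i x
    simp only [dotProduct, grad, mDiv, vGrad, frob, Matrix.smul_apply, smul_eq_mul,
      Matrix.of_apply, hprod, Fin.sum_univ_three]
    rw [(hτsym x).apply 0 1, (hτsym x).apply 0 2, (hτsym x).apply 1 2]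
    ring
  calc ∫ x, e_v x ⬝ᵥ (fun i => grad s x i * (e_s x / ρ x)
        - (1 / ρ x) * mDiv (fun y => (e_s y / (ρ y * T y)) • τ y) x i)
      = ∫ x, ((grad s x ⬝ᵥ (fun i => e_v x i / ρ x)
        + (1 / (ρ x * T x)) * frob (τ x) (vGrad (fun y i => e_v y i / ρ y) x)) * e_s x
        - ∑ i, ∑ j, pd i (fun y => e_s y / (ρ y * T y) * τ y i j * (e_v y j / ρ y)) x) :=
        integral_congr_ae (Filter.Eventually.of_forall hpt)
    _ = _ := by rw [integral_sub hR hD, hD0, sub_zero]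
end
end

section
/- Let M ∈ M₃(ℝ), let μ ≥ 0 and κ ≥ 0, and define τ := −μ( M + Mᵀ − (2/3)(tr M) I ) − κ (tr M) I, where I is the 3×3 identity matrix. Let K ∈ M₃(ℝ) be positive semidefinite, let w ∈ ℝ³, let T > 0 and ρ > 0 be real numbers, and set h_s := −(1/T) K w. Then the entropy production is nonnegative: −(1/(ρT)) (τ : M) − (1/(ρT)) (h_s · w) ≥ 0. -/
open MeasureTheory Matrix

noncomputable section

/-! The viscous dissipation `−τ : M` equals `2μ |D|² + κ (tr M)²`, where `D` is the deviatoric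
part of the strain rate `(M + Mᵀ)/2`, and the conductive term `−h_s · w` equals `(1/T) wᵀ K w`;
both are nonnegative, and the entropy production is their sum scaled by `1/(ρT) > 0`. -/

lemma frob_self_nonneg (A : Matrix (Fin 3) (Fin 3) ℝ) : 0 ≤ frob A A :=
  Finset.sum_nonneg fun i _ => Finset.sum_nonneg fun j _ => mul_self_nonneg (A i j)

lemma frob_sub_left (A B M : Matrix (Fin 3) (Fin 3) ℝ) :
    frob (A - B) M = frob A M - frob B M := by
  simp only [frob, Matrix.sub_apply, sub_mul, Finset.sum_sub_distrib]

lemma frob_smul_left (c : ℝ) (A M : Matrix (Fin 3) (Fin 3) ℝ) :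
    frob (c • A) M = c * frob A M := by
  simp only [frob, Matrix.smul_apply, smul_eq_mul, mul_assoc, Finset.mul_sum]

lemma frob_one_left (M : Matrix (Fin 3) (Fin 3) ℝ) : frob 1 M = M.trace := by
  simp [frob, trace, one_apply]

def deviatoricStrainRate (M : Matrix (Fin 3) (Fin 3) ℝ) : Matrix (Fin 3) (Fin 3) ℝ :=
  (1 / 2 : ℝ) • (M + Mᵀ) - (M.trace / 3) • 1

lemma frob_shearPart_eq (M : Matrix (Fin 3) (Fin 3) ℝ) :
    frob (M + Mᵀ - ((2 / 3) * M.trace) • 1) M =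
      2 * frob (deviatoricStrainRate M) (deviatoricStrainRate M) := by
  simp [frob, deviatoricStrainRate, trace, Fin.sum_univ_three, one_apply]
  ring

lemma neg_frob_newtonianStress_eq (M : Matrix (Fin 3) (Fin 3) ℝ) (μ κ : ℝ) :
    -frob ((-μ) • (M + Mᵀ - ((2 / 3) * M.trace) • 1) - (κ * M.trace) • 1) M =
      2 * μ * frob (deviatoricStrainRate M) (deviatoricStrainRate M) + κ * M.trace ^ 2 := by
  rw [frob_sub_left, frob_smul_left, frob_smul_left, frob_one_left, frob_shearPart_eq]
  ring

lemma Matrix.PosSemidef.mulVec_dotProduct_self_nonneg {n : Type*} [Fintype n]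
    {K : Matrix n n ℝ} (hK : K.PosSemidef) (w : n → ℝ) : 0 ≤ (K *ᵥ w) ⬝ᵥ w := by
  simpa [dotProduct_comm] using hK.dotProduct_mulVec_nonneg w

/-- Pointwise second-law inequality: the rate of entropy production
`−(1/(ρT)) τ : M − (1/(ρT)) h_s · w` is nonnegative for the Newtonian stress
`τ = −μ(M + Mᵀ − (2/3)(tr M) I) − κ (tr M) I` and entropy flux `h_s = −(1/T) K w`. -/
theorem stmt8 (M : Matrix (Fin 3) (Fin 3) ℝ) (μ κ : ℝ) (hμ : 0 ≤ μ) (hκ : 0 ≤ κ)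
    (K : Matrix (Fin 3) (Fin 3) ℝ) (hK : K.PosSemidef) (w : Fin 3 → ℝ)
    (T ρ : ℝ) (hT : 0 < T) (hρ : 0 < ρ)
    (τ : Matrix (Fin 3) (Fin 3) ℝ)
    (hτ : τ = (-μ) • (M + Mᵀ - ((2/3) * M.trace) • (1 : Matrix (Fin 3) (Fin 3) ℝ))
              - (κ * M.trace) • (1 : Matrix (Fin 3) (Fin 3) ℝ))
    (h_s : Fin 3 → ℝ) (hhs : h_s = (-(1/T)) • (K *ᵥ w)) :
    0 ≤ - (1/(ρ*T)) * frob τ M - (1/(ρ*T)) * (h_s ⬝ᵥ w) := by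
  have hvisc : 0 ≤ -frob τ M := by
    rw [hτ, neg_frob_newtonianStress_eq]
    have := frob_self_nonneg (deviatoricStrainRate M)
    positivity
  have hheat := hK.mulVec_dotProduct_self_nonneg w
  have hsplit : - (1/(ρ*T)) * frob τ M - (1/(ρ*T)) * (h_s ⬝ᵥ w) =
      1/(ρ*T) * -frob τ M + 1/(ρ*T) * (1/T) * ((K *ᵥ w) ⬝ᵥ w) := by
    rw [hhs, smul_dotProduct, smul_eq_mul]
    ring
  rw [hsplit]
  positivity
end
end

section
/- Let u : ℝ × ℝ → ℝ be twice continuously differentiable, let ρ, s : ℝ³ → ℝ be continuously differentiable with ρ(x) > 0 for all x, and let v : ℝ³ → ℝ³ be continuously differentiable. Define p(x) := ρ(x)² ∂₁u(ρ(x), s(x)), T(x) := ∂₂u(ρ(x), s(x)), and h(x) := u(ρ(x), s(x)) + p(x)/ρ(x). Then at every x ∈ ℝ³: −(Grad v) v − (1/ρ) grad p = −grad( (1/2)‖v‖² + h ) − (curl v) × v + T grad s. -/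
/-!
Two classical identities combine. Lamb's identity `(Grad v) v = (Grad v)ᵀ v + (curl v) × v` is
pointwise linear algebra, and `(Grad v)ᵀ v = grad (½ ‖v‖²)`. Differentiating the enthalpy gives
`grad h = ∂ᵨu grad ρ + T grad s + ρ⁻¹ grad p - (p / ρ²) grad ρ`, and the two `grad ρ` terms
cancel because `p = ρ² ∂ᵨu`, leaving the Gibbs relation `grad h = T grad s + ρ⁻¹ grad p`.
-/

open MeasureTheory Matrix

noncomputable section

section Calculus

variable {E : Type*} [NormedAddCommGroup E] [NormedSpace ℝ E]

theorem ContinuousLinearMap.apply_prod_eq (L : ℝ × ℝ →L[ℝ] ℝ) (a b : ℝ) :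
    L (a, b) = a * L (1, 0) + b * L (0, 1) := by
  rw [← smul_eq_mul, ← smul_eq_mul, ← map_smul, ← map_smul, ← map_add]
  simp

theorem hasFDerivAt_enthalpy {u : ℝ × ℝ → ℝ} {ρ s p : E → ℝ} {ρ' s' p' : E →L[ℝ] ℝ} {x : E}
    (hu : DifferentiableAt ℝ u (ρ x, s x)) (hρ : HasFDerivAt ρ ρ' x) (hs : HasFDerivAt s s' x)
    (hp : HasFDerivAt p p' x) (hρx : ρ x ≠ 0)
    (hpx : p x = ρ x ^ 2 * fderiv ℝ u (ρ x, s x) (1, 0)) :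
    HasFDerivAt (fun y => u (ρ y, s y) + p y / ρ y)
      (fderiv ℝ u (ρ x, s x) (0, 1) • s' + (ρ x)⁻¹ • p') x := by
  have hU := hu.hasFDerivAt.comp x (hρ.prodMk hs)
  have hinv := (hasDerivAt_inv hρx).comp_hasFDerivAt x hρ
  refine ((hU.add (hp.mul hinv)).congr_fderiv ?_).congr_of_eventuallyEq
    (.of_forall fun y => by simp [div_eq_mul_inv])
  ext d
  simp only [_root_.add_apply, _root_.smul_apply, ContinuousLinearMap.comp_apply,
    ContinuousLinearMap.prod_apply, smul_eq_mul, Function.comp_apply]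
  rw [ContinuousLinearMap.apply_prod_eq, hpx]
  field_simp
  ring

end Calculus

section R3

variable {f g : R3 → ℝ} {x : R3}

theorem HasFDerivAt.grad_eq {f' : R3 →L[ℝ] ℝ} (hf : HasFDerivAt f f' x) :
    grad f x = fun i => f' (Pi.single i 1) := by
  rw [← hf.fderiv]
  rfl

theorem grad_add (hf : DifferentiableAt ℝ f x) (hg : DifferentiableAt ℝ g x) :
    grad (fun y => f y + g y) x = grad f x + grad g x :=
  (hf.hasFDerivAt.add hg.hasFDerivAt).grad_eq

theorem grad_half_dotProduct_self {v : R3 → R3} (hv : DifferentiableAt ℝ v x) :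
    grad (fun y => 1 / 2 * (v y ⬝ᵥ v y)) x = (vGrad v x)ᵀ *ᵥ v x := by
  have hvj (j : Fin 3) : HasFDerivAt (fun y => v y j) (fderiv ℝ (fun y => v y j) x) x :=
    (differentiableAt_pi.1 hv j).hasFDerivAt
  have hK : HasFDerivAt (fun y => 1 / 2 * (v y ⬝ᵥ v y))
      (∑ j, v x j • fderiv ℝ (fun y => v y j) x) x := by
    refine (((HasFDerivAt.fun_sum (u := Finset.univ) fun j _ => (hvj j).mul (hvj j)).const_mul
      (1 / 2 : ℝ)).congr_fderiv ?_).congr_of_eventuallyEq (.of_forall fun y => rfl)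
    ext d
    simp only [Finset.mul_sum, _root_.smul_apply, _root_.sum_apply, _root_.add_apply, smul_eq_mul]
    exact Finset.sum_congr rfl fun j _ => by ring
  rw [hK.grad_eq]
  ext i
  simp [mulVec, dotProduct, vGrad, pd, mul_comm]

theorem grad_enthalpy {u : ℝ × ℝ → ℝ} {ρ s p : R3 → ℝ}
    (hu : DifferentiableAt ℝ u (ρ x, s x)) (hρ : DifferentiableAt ℝ ρ x)
    (hs : DifferentiableAt ℝ s x) (hp : DifferentiableAt ℝ p x) (hρx : ρ x ≠ 0)
    (hpx : p x = ρ x ^ 2 * fderiv ℝ u (ρ x, s x) (1, 0)) :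
    grad (fun y => u (ρ y, s y) + p y / ρ y) x
      = fderiv ℝ u (ρ x, s x) (0, 1) • grad s x + (ρ x)⁻¹ • grad p x := by
  rw [(hasFDerivAt_enthalpy hu hρ.hasFDerivAt hs.hasFDerivAt hp.hasFDerivAt hρx hpx).grad_eq]
  rfl

theorem vGrad_mulVec_eq_transpose_mulVec_add_cross (v : R3 → R3) (x w : R3) :
    vGrad v x *ᵥ w = (vGrad v x)ᵀ *ᵥ w + cross (curl v x) w := by
  ext i
  fin_cases i <;> simp [vGrad, curl, cross, mulVec, dotProduct, Fin.sum_univ_three] <;> ring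

end R3

/-- Rewriting of the convective and pressure terms of the momentum equation:
`−(Grad v) v − (1/ρ) grad p = −grad((1/2)‖v‖² + h) − (curl v) × v + T grad s`,
with `p = ρ² ∂₁u(ρ,s)`, `T = ∂₂u(ρ,s)` and `h = u(ρ,s) + p/ρ`. -/
theorem stmt11 (u : ℝ × ℝ → ℝ) (hu : ContDiff ℝ 2 u)
    (ρ s : R3 → ℝ) (hρ : ContDiff ℝ 1 ρ) (hs : ContDiff ℝ 1 s)
    (hρpos : ∀ x, 0 < ρ x)
    (v : R3 → R3) (hv : ContDiff ℝ 1 v)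
    (p T h : R3 → ℝ)
    (hp : ∀ x, p x = ρ x ^ 2 * fderiv ℝ u (ρ x, s x) (1, 0))
    (hT : ∀ x, T x = fderiv ℝ u (ρ x, s x) (0, 1))
    (hh : ∀ x, h x = u (ρ x, s x) + p x / ρ x) :
    ∀ x : R3,
      - (vGrad v x *ᵥ v x) - (ρ x)⁻¹ • grad p x
        = - grad (fun y => (1/2) * (v y ⬝ᵥ v y) + h y) x
          - cross (curl v x) (v x) + T x • grad s x := by
  intro x
  obtain rfl : h = fun y => u (ρ y, s y) + p y / ρ y := funext hh
  have hpC : ContDiff ℝ 1 p := by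
    rw [funext hp]
    exact (hρ.pow 2).mul
      (((hu.fderiv_right (by norm_num)).comp (hρ.prodMk hs)).clm_apply contDiff_const)
  have hρx := (hρpos x).ne'
  have hud : DifferentiableAt ℝ u (ρ x, s x) := (hu.differentiable two_ne_zero).differentiableAt
  have hρd : DifferentiableAt ℝ ρ x := (hρ.differentiable one_ne_zero).differentiableAt
  have hsd : DifferentiableAt ℝ s x := (hs.differentiable one_ne_zero).differentiableAt
  have hpd : DifferentiableAt ℝ p x := (hpC.differentiable one_ne_zero).differentiableAt
  have hvd : DifferentiableAt ℝ v x := (hv.differentiable one_ne_zero).differentiableAt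
  rw [grad_add (by simp only [dotProduct]; fun_prop) (by fun_prop (disch := exact hρx)),
    grad_half_dotProduct_self hvd, grad_enthalpy hud hρd hsd hpd hρx (hp x), ← hT x,
    vGrad_mulVec_eq_transpose_mulVec_add_cross]
  abel
end
end
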